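/- Let n ≥ 1 and let a = (a_S)_{S ⊆ {1,…,n}} ∈ ℝ^{2^n}. Let M ⊆ {1,…,n} be the set of all letters i such that i ∈ S for some S with a_S ≠ 0, let k = |M|, and let γ : {1,…,k} → M be the increasing bijection. Define a' = (a'_T)_{T ⊆ {1,…,k}} ∈ ℝ^{2^k} by a'_T = a_{γ(T)}, where γ(T) = {γ(j) : j ∈ T}. Then a ∈ K_{n+1} if and only if a' ∈ K_{k+1}, and a is an extreme ray of K_{n+1} if and only if a' is an extreme ray of K_{k+1}. -/

import Mathlib

/-- A graded poset: a finite poset with a least element `bot`, a greatest element `top`,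
and a rank function that is `0` at `bot` and increases by one along covering relations. -/
structure GradedPoset where
  carrier : Type
  [fintypeCarrier : Fintype carrier]
  [partialOrderCarrier : PartialOrder carrier]
  bot : carrier
  top : carrier
  bot_le : ∀ x : carrier, bot ≤ x
  le_top : ∀ x : carrier, x ≤ top
  rank : carrier → ℕ
  rank_bot : rank bot = 0
  rank_covBy : ∀ x y : carrier, x ⋖ y → rank y = rank x + 1

attribute [instance] GradedPoset.fintypeCarrier GradedPoset.partialOrderCarrier

/-- The flag number `f_S(P)`: the number of chains in `P` whose set of ranks is `S`. -/
noncomputable def flagNum (P : GradedPoset) (S : Finset ℕ) : ℕ :=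
  Set.ncard {c : Finset P.carrier |
    IsChain (· ≤ ·) (↑c : Set P.carrier) ∧ c.image P.rank = S}

/-- The cone `K_r` of all linear inequalities valid on flag `f`-vectors of graded posets
of rank `r`, modelled inside `Finset ℕ → ℝ` as the functions supported on subsets of
`{1,…,r-1}` whose associated functional is nonnegative on all graded posets of rank `r`. -/
def coneK (r : ℕ) : Set (Finset ℕ → ℝ) :=
  {a | (∀ S : Finset ℕ, ¬ S ⊆ Finset.Icc 1 (r - 1) → a S = 0) ∧
    ∀ P : GradedPoset, P.rank P.top = r →
      0 ≤ ∑ S ∈ (Finset.Icc 1 (r - 1)).powerset, a S * (flagNum P S : ℝ)}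

/-- The vector `e_∅` with coordinate `1` at `∅` and `0` elsewhere
(corresponding to the chain operator `f_∅`). -/
noncomputable def eEmpty : Finset ℕ → ℝ := fun S => if S = ∅ then 1 else 0

/-- `F` is an extreme ray of the cone `K`: `F` is a nonzero element of `K` such that
whenever `F = G + H` with `G, H ∈ K`, both `G` and `H` are nonnegative multiples of `F`. -/
def IsExtremeRay (K : Set (Finset ℕ → ℝ)) (F : Finset ℕ → ℝ) : Prop :=
  F ∈ K ∧ F ≠ 0 ∧
    ∀ G H : Finset ℕ → ℝ, G ∈ K → H ∈ K → F = G + H →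
      (∃ c : ℝ, 0 ≤ c ∧ G = c • F) ∧ ∃ c : ℝ, 0 ≤ c ∧ H = c • F

/-!
Let `ρ` be the strictly increasing extension of `γ` to `ℕ` with `ρ 0 = 0` and `ρ (k+1) = n+1`.
Flag numbers can be transported in both directions. Stretching each element of rank `j` of a
poset `Q` of rank `k+1` into a chain of length `ρ (j+1) - ρ j` gives a poset of rank `n+1` with
`f_{ρ(T)} = f_T(Q)`; selecting the ranks in the range of `ρ` from a poset `P` of rank `n+1`
gives a poset of rank `k+1` with `f_T = f_{ρ(T)}(P)`. Hence `b ↦ (T ↦ b (ρ T))` is a linear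
bijection from the elements of `K_{n+1}` supported on subsets of `M` onto `K_{k+1}`.

For extreme rays it remains to see that every summand of `a` in `K_{n+1}` is again supported on
subsets of `M`. On the multichain with `m_j` elements of rank `j` one has
`f_S = ∏_{j ∈ S} m_j`, so an element of the cone gives a multilinear polynomial in the `m_j`
that is nonnegative at all positive integer points. Its coefficient of `m_i` is then
nonnegative, and for `i ∉ M` the two summands have opposite such coefficients, which therefore
vanish.
-/

open Finset

section Transversal

variable {α : Type*} [Fintype α] {r : α → ℕ} {S : Finset ℕ}

theorem apply_eq_of_mem_pi_fiber {f : (j : ℕ) → j ∈ S → α}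
    (hf : f ∈ S.pi fun j => ({x | r x = j} : Finset α)) {j : ℕ} (hj : j ∈ S) :
    r (f j hj) = j :=
  (mem_filter.1 (mem_pi.1 hf j hj)).2

variable [DecidableEq α]

theorem injOn_image_attach_pi_fiber :
    Set.InjOn (fun f : (j : ℕ) → j ∈ S → α => S.attach.image fun j => f j.1 j.2)
      ↑(S.pi fun j => ({x | r x = j} : Finset α)) := by
  intro f hf f' hf' h
  funext j hj
  dsimp only at h
  have hmem : f j hj ∈ S.attach.image fun i => f' i.1 i.2 :=
    h ▸ mem_image_of_mem (fun i => f i.1 i.2) (mem_attach S ⟨j, hj⟩)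
  obtain ⟨⟨i, hi⟩, -, hi'⟩ := mem_image.1 hmem
  obtain rfl : i = j := by
    rw [← apply_eq_of_mem_pi_fiber hf' hi, hi', apply_eq_of_mem_pi_fiber hf hj]
  exact hi'.symm

theorem setOf_injOn_image_eq_image_pi_fiber :
    {c : Finset α | Set.InjOn r c ∧ c.image r = S} =
      (fun f : (j : ℕ) → j ∈ S → α => S.attach.image fun j => f j.1 j.2) ''
        ↑(S.pi fun j => ({x | r x = j} : Finset α)) := by
  ext c
  constructor
  · rintro ⟨hinj, rfl⟩
    choose f hfc hfr using fun j (hj : j ∈ c.image r) => mem_image.1 hj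
    refine ⟨f, mem_pi.2 fun j hj => by simp [hfr], ?_⟩
    ext x
    refine ⟨fun hx => ?_, fun hx => ?_⟩
    · obtain ⟨⟨j, hj⟩, -, rfl⟩ := mem_image.1 hx
      exact hfc j hj
    · have hrx := mem_image_of_mem r hx
      exact mem_image.2 ⟨⟨r x, hrx⟩, mem_attach _ _, hinj (hfc _ hrx) hx (hfr _ hrx)⟩
  · rintro ⟨f, hf, rfl⟩
    refine ⟨?_, ?_⟩
    · intro x hx y hy h
      obtain ⟨⟨i, hi⟩, -, rfl⟩ := mem_image.1 (mem_coe.1 hx)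
      obtain ⟨⟨j, hj⟩, -, rfl⟩ := mem_image.1 (mem_coe.1 hy)
      obtain rfl : i = j := by
        rw [← apply_eq_of_mem_pi_fiber hf hi, h, apply_eq_of_mem_pi_fiber hf hj]
      rfl
    · ext j
      rw [image_image, mem_image]
      refine ⟨?_, fun hj => ⟨⟨j, hj⟩, mem_attach _ _, apply_eq_of_mem_pi_fiber hf hj⟩⟩
      rintro ⟨⟨i, hi⟩, -, rfl⟩
      simpa [apply_eq_of_mem_pi_fiber hf hi] using hi

variable (r S)

theorem ncard_setOf_injOn_image_eq :
    {c : Finset α | Set.InjOn r c ∧ c.image r = S}.ncard = ∏ j ∈ S, #{x | r x = j} := by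
  rw [setOf_injOn_image_eq_image_pi_fiber, injOn_image_attach_pi_fiber.ncard_image,
    Set.ncard_coe_finset, card_pi]

end Transversal

namespace GradedPoset

section Basic

variable (P : GradedPoset)

theorem rank_strictMono : StrictMono P.rank := by
  classical
  let := Fintype.toLocallyFiniteOrder (α := P.carrier)
  exact (strictMono_iff_forall_covBy _).2 fun x y h => by rw [P.rank_covBy x y h]; omega

theorem exists_le_le_rank_eq {x y : P.carrier} (hxy : x ≤ y) {r : ℕ} (hxr : P.rank x ≤ r)
    (hry : r ≤ P.rank y) : ∃ z, x ≤ z ∧ z ≤ y ∧ P.rank z = r := by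
  induction h : P.rank y - r generalizing y with
  | zero => exact ⟨y, hxy, le_rfl, by omega⟩
  | succ d ih =>
    have hlt : x < y := lt_of_le_of_ne hxy (by rintro rfl; omega)
    obtain ⟨z, hxz, hzy⟩ := exists_le_covBy_of_lt hlt
    have := P.rank_covBy z y hzy
    obtain ⟨w, hxw, hwz, hw⟩ := ih hxz (by omega) (by omega)
    exact ⟨w, hxw, hwz.trans hzy.le, hw⟩

end Basic

noncomputable def ofStrictMono (α : Type) [Finite α] [PartialOrder α] (bot top : α)
    (bot_le : ∀ x, bot ≤ x) (le_top : ∀ x, x ≤ top) (rank : α → ℕ)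
    (rank_bot : rank bot = 0) (hrank : StrictMono rank)
    (exists_between : ∀ x y, x < y → rank x + 1 < rank y → ∃ z, x < z ∧ z < y) :
    GradedPoset where
  carrier := α
  fintypeCarrier := Fintype.ofFinite α
  bot := bot
  top := top
  bot_le := bot_le
  le_top := le_top
  rank := rank
  rank_bot := rank_bot
  rank_covBy x y h := by
    have := hrank h.lt
    by_contra hne
    obtain ⟨z, hxz, hzy⟩ := exists_between x y h.lt (by omega)
    exact h.2 hxz hzy

theorem flagNum_image_of_orderEmbedding {P Q : GradedPoset} (φ : Q.carrier ↪o P.carrier)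
    {ρ : ℕ → ℕ} (hρ : ρ.Injective) (hrank : ∀ x, P.rank (φ x) = ρ (Q.rank x))
    (hrange : ∀ y, P.rank y ∈ Set.range ρ → y ∈ Set.range φ) (T : Finset ℕ) :
    flagNum P (T.image ρ) = flagNum Q T := by
  classical
  have hrankImage : ∀ c : Finset Q.carrier,
      (c.image φ).image P.rank = (c.image Q.rank).image ρ := fun c => by
    simp only [image_image]
    exact image_congr fun x _ => hrank x
  unfold flagNum
  rw [← Set.ncard_image_of_injective _ (image_injective φ.injective)]
  congr 1
  ext c'
  simp only [Set.mem_ofPred_eq, Set.mem_image]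
  constructor
  · rintro ⟨hchain, hc'⟩
    have hc'φ : (c'.preimage φ φ.injective.injOn).image φ = c' := by
      rw [image_preimage, filter_true_of_mem]
      intro y hy
      obtain ⟨t, -, ht⟩ := mem_image.1 (hc' ▸ mem_image_of_mem P.rank hy)
      exact hrange y ⟨t, ht⟩
    refine ⟨_, ⟨?_, ?_⟩, hc'φ⟩
    · rw [← IsChain.image_relEmbedding_iff (φ := φ), ← coe_image, hc'φ]
      exact hchain
    · apply image_injective hρ
      rw [← hrankImage, hc'φ, hc']
  · rintro ⟨c, ⟨hchain, hc⟩, rfl⟩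
    refine ⟨?_, by rw [hrankImage, hc]⟩
    rw [coe_image]
    exact IsChain.image_relEmbedding_iff.2 hchain

theorem flagNum_eq_prod_card (P : GradedPoset) (hP : ∀ x y, P.rank x < P.rank y → x ≤ y)
    (S : Finset ℕ) : flagNum P S = ∏ j ∈ S, #{x | P.rank x = j} := by
  classical
  rw [flagNum, ← ncard_setOf_injOn_image_eq]
  congr 1
  ext c
  refine and_congr_left' ⟨fun hc x hx y hy hrk => ?_, fun hc x hx y hy hne => ?_⟩
  · by_contra hne
    rcases hc hx hy hne with h | h
    · exact (P.rank_strictMono (lt_of_le_of_ne h hne)).ne hrk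
    · exact (P.rank_strictMono (lt_of_le_of_ne h (Ne.symm hne))).ne hrk.symm
  · rcases lt_or_gt_of_ne (mt (hc hx hy) hne) with h | h
    · exact Or.inl (hP x y h)
    · exact Or.inr (hP y x h)

section RankSelection

variable (P : GradedPoset) {ρ : ℕ → ℕ} (hρ : StrictMono ρ) (hρ0 : ρ 0 = 0)
  (htop : P.rank P.top ∈ Set.range ρ)

noncomputable def rankSelection : GradedPoset :=
  ofStrictMono {x : P.carrier // P.rank x ∈ Set.range ρ} ⟨P.bot, 0, by rw [hρ0, P.rank_bot]⟩
    ⟨P.top, htop⟩ (fun x => P.bot_le x.1) (fun x => P.le_top x.1)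
    (fun x => Function.invFun ρ (P.rank x.1))
    (by rw [P.rank_bot, ← hρ0, Function.leftInverse_invFun hρ.injective, hρ0])
    (fun x y hxy => by
      have := P.rank_strictMono (Subtype.coe_lt_coe.2 hxy)
      rwa [← Function.invFun_eq x.2, ← Function.invFun_eq y.2, hρ.lt_iff_lt] at this)
    (fun x y hxy hrk => by
      have hx := Function.invFun_eq x.2
      have hy := Function.invFun_eq y.2
      obtain ⟨z, hxz, hzy, hz⟩ := P.exists_le_le_rank_eq (Subtype.coe_le_coe.2 hxy.le)
        (hx ▸ (hρ (Nat.lt_succ_self _)).le) (hy ▸ (hρ hrk).le)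
      refine ⟨⟨z, _, hz.symm⟩, Subtype.coe_lt_coe.1 (lt_of_le_of_ne hxz ?_),
        Subtype.coe_lt_coe.1 (lt_of_le_of_ne hzy ?_)⟩
      · rintro rfl
        exact (hρ (Nat.lt_succ_self _)).ne (hx.trans hz)
      · rintro rfl
        exact (hρ hrk).ne (hz.symm.trans hy.symm))

variable {P hρ hρ0 htop}

theorem rankSelection_rank (x : (P.rankSelection hρ hρ0 htop).carrier) :
    ρ ((P.rankSelection hρ hρ0 htop).rank x) = P.rank x.1 :=
  Function.invFun_eq x.2

theorem rankSelection_rank_top {r : ℕ} (hr : P.rank P.top = ρ r) :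
    (P.rankSelection hρ hρ0 htop).rank (P.rankSelection hρ hρ0 htop).top = r :=
  hρ.injective ((rankSelection_rank _).trans hr)

theorem flagNum_rankSelection (T : Finset ℕ) :
    flagNum (P.rankSelection hρ hρ0 htop) T = flagNum P (T.image ρ) :=
  (flagNum_image_of_orderEmbedding (OrderEmbedding.subtype _) hρ.injective
    (fun x => (rankSelection_rank x).symm) (fun y hy => ⟨⟨y, hy⟩, rfl⟩) T).symm

end RankSelection

section Stretch

variable (Q : GradedPoset) (g : ℕ → ℕ)

/-- The element `pt` of `Q` is replaced by a chain indexed by `[g (rank pt), g (rank pt + 1))`. -/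
@[ext]
structure StretchCarrier where
  pt : Q.carrier
  level : ℕ
  le_level : g (Q.rank pt) ≤ level
  level_lt : level < g (Q.rank pt + 1)

variable {Q g}

theorem StretchCarrier.toLex_injective :
    (fun p : StretchCarrier Q g => toLex (p.pt, p.level)).Injective := by
  intro p q h
  cases p
  cases q
  simp_all

instance : PartialOrder (StretchCarrier Q g) :=
  PartialOrder.lift _ StretchCarrier.toLex_injective

theorem StretchCarrier.le_iff {p q : StretchCarrier Q g} :
    p ≤ q ↔ p.pt < q.pt ∨ p.pt = q.pt ∧ p.level ≤ q.level :=
  Prod.Lex.toLex_le_toLex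

theorem StretchCarrier.lt_iff {p q : StretchCarrier Q g} :
    p < q ↔ p.pt < q.pt ∨ p.pt = q.pt ∧ p.level < q.level :=
  Prod.Lex.toLex_lt_toLex

instance : Finite (StretchCarrier Q g) := by
  classical
  let B := univ.sup fun x => g (Q.rank x + 1)
  have hB (p : StretchCarrier Q g) : p.level < B :=
    p.level_lt.trans_le (le_sup (f := fun x => g (Q.rank x + 1)) (mem_univ _))
  refine Finite.of_injective (β := Q.carrier × Fin B) (fun p => (p.pt, ⟨p.level, hB p⟩)) ?_
  intro p q h
  simp only [Prod.mk.injEq, Fin.mk.injEq] at h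
  exact StretchCarrier.toLex_injective (by simp [h.1, h.2])

theorem StretchCarrier.level_strictMono (hg : StrictMono g) :
    StrictMono (StretchCarrier.level : StretchCarrier Q g → ℕ) := fun p q hpq => by
  rcases StretchCarrier.lt_iff.1 hpq with h | ⟨-, h⟩
  · calc p.level < g (Q.rank p.pt + 1) := p.level_lt
      _ ≤ g (Q.rank q.pt) := hg.monotone (Q.rank_strictMono h)
      _ ≤ q.level := q.le_level
  · exact h

theorem StretchCarrier.exists_between (hg : StrictMono g) {p q : StretchCarrier Q g} (hpq : p < q)
    (hrk : p.level + 1 < q.level) : ∃ z, p < z ∧ z < q := by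
  by_cases hp : p.level + 1 < g (Q.rank p.pt + 1)
  · refine ⟨⟨p.pt, p.level + 1, by have := p.le_level; omega, hp⟩,
      lt_iff.2 (Or.inr ⟨rfl, by simp⟩), lt_iff.2 ?_⟩
    rcases lt_iff.1 hpq with h | ⟨h, -⟩
    · exact Or.inl h
    · exact Or.inr ⟨h, by simpa using hrk⟩
  have hpt : p.pt < q.pt := by
    rcases lt_iff.1 hpq with h | ⟨h, -⟩
    · exact h
    · have := q.level_lt; rw [← h] at this; omega
  obtain ⟨z, hpz, hzq⟩ := exists_covBy_le_of_lt hpt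
  have hz := Q.rank_covBy _ _ hpz
  refine ⟨⟨z, g (Q.rank z), le_rfl, hg (Nat.lt_succ_self _)⟩, lt_iff.2 (Or.inl hpz.lt),
    lt_iff.2 (hzq.lt_or_eq.imp_right fun h => ⟨h, ?_⟩)⟩
  show g (Q.rank z) < q.level
  rw [hz]
  omega

variable (Q g)
variable (hg : StrictMono g) (hg0 : g 0 = 0) (htop : g (Q.rank Q.top + 1) = g (Q.rank Q.top) + 1)

noncomputable def stretch : GradedPoset :=
  ofStrictMono (StretchCarrier Q g) ⟨Q.bot, 0, by rw [Q.rank_bot, hg0], by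
      rw [Q.rank_bot, zero_add, ← hg0]; exact hg Nat.zero_lt_one⟩
    ⟨Q.top, g (Q.rank Q.top), le_rfl, htop ▸ Nat.lt_succ_self _⟩
    (fun p => StretchCarrier.le_iff.2 <| (Q.bot_le p.pt).lt_or_eq.imp id fun h => ⟨h, by simp⟩)
    (fun p => StretchCarrier.le_iff.2 <| (Q.le_top p.pt).lt_or_eq.imp id fun h => ⟨h, by
      have := p.level_lt; rw [h, htop] at this; exact Nat.le_of_lt_succ this⟩)
    StretchCarrier.level rfl (StretchCarrier.level_strictMono hg)
    (fun _ _ => StretchCarrier.exists_between hg)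

variable {Q g hg hg0 htop}

theorem stretch_rank_top :
    (Q.stretch g hg hg0 htop).rank (Q.stretch g hg hg0 htop).top = g (Q.rank Q.top) :=
  rfl

theorem flagNum_stretch (T : Finset ℕ) :
    flagNum (Q.stretch g hg hg0 htop) (T.image g) = flagNum Q T := by
  let φ : Q.carrier ↪o (Q.stretch g hg hg0 htop).carrier :=
    OrderEmbedding.ofMapLEIff (fun x => ⟨x, g (Q.rank x), le_rfl, hg (Nat.lt_succ_self _)⟩)
      fun x y => StretchCarrier.le_iff.trans
        ⟨fun h => h.elim le_of_lt fun h => h.1.le,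
          fun h => h.lt_or_eq.imp_right fun h => ⟨h, by subst h; exact le_rfl⟩⟩
  refine flagNum_image_of_orderEmbedding φ hg.injective (fun _ => rfl) (fun p ⟨t, ht⟩ => ?_) T
  have hpt : Q.rank p.pt = t := by
    have h1 := p.le_level
    have h2 := p.level_lt
    change g t = p.level at ht
    rw [← ht, hg.le_iff_le] at h1
    rw [← ht, hg.lt_iff_lt] at h2
    omega
  refine ⟨p.pt, StretchCarrier.ext rfl ?_⟩
  show g (Q.rank p.pt) = p.level
  rw [hpt]
  exact ht

end Stretch

end GradedPoset

section MultiChain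

variable (r : ℕ) (m : ℕ → ℕ)

def MultiChainCarrier : Type := Σ j : Fin (r + 1), Fin (m j)

instance : Finite (MultiChainCarrier r m) :=
  inferInstanceAs (Finite (Σ j : Fin (r + 1), Fin (m j)))

instance : PartialOrder (MultiChainCarrier r m) where
  le x y := x.1 < y.1 ∨ x = y
  le_refl _ := Or.inr rfl
  le_trans := by
    rintro x y z (h | rfl) (h' | rfl)
    exacts [Or.inl (h.trans h'), Or.inl h, Or.inl h', Or.inr rfl]
  le_antisymm := by
    rintro x y (h | h) (h' | h')
    exacts [absurd (h.trans h') (lt_irrefl _), h'.symm, h, h]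

variable {r m}

theorem MultiChainCarrier.le_iff {x y : MultiChainCarrier r m} : x ≤ y ↔ x.1 < y.1 ∨ x = y :=
  Iff.rfl

theorem MultiChainCarrier.lt_iff {x y : MultiChainCarrier r m} : x < y ↔ x.1 < y.1 :=
  ⟨fun h => (le_iff.1 h.le).resolve_right h.ne,
    fun h => lt_of_le_of_ne (Or.inl h) fun e => h.ne (congrArg Sigma.fst e)⟩

theorem MultiChainCarrier.eq_of_fst_eq {x y : MultiChainCarrier r m} (h : x.1 = y.1)
    (hm : m x.1 = 1) : x = y := by
  obtain ⟨i, u⟩ := x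
  obtain ⟨j, v⟩ := y
  dsimp only at h hm
  subst h
  have := u.isLt
  have := v.isLt
  exact congrArg (Sigma.mk i) (Fin.ext (by omega))

variable (hm : ∀ j, 0 < m j) (hm0 : m 0 = 1) (hmr : m r = 1)

noncomputable def multiChain : GradedPoset :=
  GradedPoset.ofStrictMono (MultiChainCarrier r m) ⟨0, 0, hm _⟩ ⟨Fin.last r, 0, hm _⟩
    (fun x => (Fin.zero_le x.1).lt_or_eq.imp id fun h =>
      MultiChainCarrier.eq_of_fst_eq h (by simpa using hm0))
    (fun x => (Fin.le_last x.1).lt_or_eq.imp id fun h =>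
      MultiChainCarrier.eq_of_fst_eq h (by simpa [h] using hmr))
    (fun x => x.1.val) rfl (fun _ _ h => MultiChainCarrier.lt_iff.1 h)
    (fun x y hxy hrk => ⟨⟨⟨x.1 + 1, by have := y.1.2; omega⟩, 0, hm _⟩,
      MultiChainCarrier.lt_iff.2 (Fin.lt_def.2 (Nat.lt_succ_self _)),
      MultiChainCarrier.lt_iff.2 (Fin.lt_def.2 hrk)⟩)

variable {hm hm0 hmr}

theorem flagNum_multiChain {S : Finset ℕ} (hS : S ⊆ range (r + 1)) :
    flagNum (multiChain hm hm0 hmr) S = ∏ j ∈ S, m j := by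
  classical
  rw [GradedPoset.flagNum_eq_prod_card _ fun x y h => Or.inl (Fin.lt_def.2 h)]
  refine prod_congr rfl fun j hj => ?_
  have hjr : j < r + 1 := mem_range.1 (hS hj)
  calc #{x : (multiChain hm hm0 hmr).carrier | x.1.val = j}
      = #{x : (multiChain hm hm0 hmr).carrier | x.1 = ⟨j, hjr⟩} := by simp only [Fin.ext_iff]
    _ = m j := by
      rw [← Fintype.card_subtype]
      exact Fintype.card_eq_nat_card.trans <| (Nat.card_congr
        (Equiv.sigmaSubtype (β := fun i : Fin (r + 1) => Fin (m i)) _)).trans (Nat.card_fin _)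

end MultiChain

def multilinearEval (N : Finset ℕ) (c : Finset ℕ → ℝ) (x : ℕ → ℝ) : ℝ :=
  ∑ S ∈ N.powerset, c S * ∏ j ∈ S, x j

theorem multilinearEval_insert_update {N : Finset ℕ} {i : ℕ} (hi : i ∉ N)
    (c : Finset ℕ → ℝ) (x : ℕ → ℝ) (t : ℝ) :
    multilinearEval (insert i N) c (Function.update x i t) =
      multilinearEval N c x + t * multilinearEval N (fun S => c (insert i S)) x := by
  unfold multilinearEval
  rw [sum_powerset_insert hi, mul_sum]
  congr 1 <;> refine sum_congr rfl fun S hS => ?_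
  · rw [prod_update_of_notMem fun h => hi (mem_powerset.1 hS h)]
  · have hiS : i ∉ S := fun h => hi (mem_powerset.1 hS h)
    rw [prod_insert hiS, prod_update_of_notMem hiS, Function.update_self]
    ring

theorem eq_zero_of_multilinearEval_eq_zero {N : Finset ℕ} {c : Finset ℕ → ℝ}
    (h : ∀ m : ℕ → ℕ, (∀ j, 0 < m j) → multilinearEval N c (Nat.cast ∘ m) = 0) :
    ∀ S ⊆ N, c S = 0 := by
  induction N using Finset.induction_on generalizing c with
  | empty =>
    intro S hS
    simpa [subset_empty.1 hS, multilinearEval] using h 1 fun _ => one_pos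
  | insert i N hi ih =>
    have hsplit (m : ℕ → ℕ) (hm : ∀ j, 0 < m j) :
        multilinearEval N c (Nat.cast ∘ m) = 0 ∧
          multilinearEval N (fun S => c (insert i S)) (Nat.cast ∘ m) = 0 := by
      have hm' (t : ℕ) : ∀ j, 0 < Function.update m i (t + 1) j := by
        intro j; rcases eq_or_ne j i with rfl | hj <;> simp [*]
      have h1 := h _ (hm' 0)
      have h2 := h _ (hm' 1)
      rw [Function.comp_update, multilinearEval_insert_update hi] at h1 h2
      push_cast at h1 h2
      constructor <;> linarith
    intro S hS
    by_cases hiS : i ∈ S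
    · rw [← insert_erase hiS]
      exact ih (fun m hm => (hsplit m hm).2) _ (subset_insert_iff.1 hS)
    · exact ih (fun m hm => (hsplit m hm).1) S ((subset_insert_iff_of_notMem hiS).1 hS)

theorem nonneg_of_forall_nat_le_add_mul {A B : ℝ} (h : ∀ t : ℕ, 0 ≤ A + (t + 1) * B) :
    0 ≤ B := by
  by_contra! hB
  obtain ⟨t, ht⟩ := exists_nat_gt (A / -B)
  rw [div_lt_iff₀ (neg_pos.2 hB)] at ht
  linarith [h t]

theorem multilinearEval_nonneg_of_mem_coneK {n : ℕ} {b : Finset ℕ → ℝ}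
    (hb : b ∈ coneK (n + 1)) {m : ℕ → ℕ} (hm : ∀ j, 0 < m j) :
    0 ≤ multilinearEval (Icc 1 n) b (Nat.cast ∘ m) := by
  let m' : ℕ → ℕ := fun j => if j ∈ Icc 1 n then m j else 1
  have hm' : ∀ j, 0 < m' j := fun j => by dsimp only [m']; split_ifs <;> simp [hm]
  have := hb.2 (multiChain (r := n + 1) hm' (by simp [m']) (by simp [m'])) rfl
  rw [Nat.add_sub_cancel] at this
  refine this.trans_eq (sum_congr rfl fun S hS => ?_)
  have hSn := mem_powerset.1 hS
  rw [flagNum_multiChain fun j hj => mem_range.2 (by have := mem_Icc.1 (hSn hj); omega)]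
  push_cast
  congr 1
  exact prod_congr rfl fun j hj => by simp only [m', Function.comp_apply, if_pos (hSn hj)]

/-- The multichain polynomial of an element of the cone is nonnegative at all positive integer
points, hence so is its coefficient of `x_i` (let `x_i → ∞`). -/
theorem eq_zero_of_mem_coneK_of_add_eq_zero {n i : ℕ} (hi : i ∈ Icc 1 n)
    {G H : Finset ℕ → ℝ} (hG : G ∈ coneK (n + 1)) (hH : H ∈ coneK (n + 1))
    (hGH : ∀ S, i ∈ S → G S + H S = 0) {S : Finset ℕ} (hS : i ∈ S) : G S = 0 := by
  by_cases hSn : S ⊆ Icc 1 n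
  swap
  · exact hG.1 S (by rwa [Nat.add_sub_cancel])
  set N := (Icc 1 n).erase i
  have hiN : i ∉ N := notMem_erase i _
  let D : (Finset ℕ → ℝ) → (ℕ → ℕ) → ℝ := fun b m =>
    multilinearEval N (fun S => b (insert i S)) (Nat.cast ∘ m)
  have hD {b} (hb : b ∈ coneK (n + 1)) {m : ℕ → ℕ} (hm : ∀ j, 0 < m j) : 0 ≤ D b m := by
    refine nonneg_of_forall_nat_le_add_mul (A := multilinearEval N b (Nat.cast ∘ m)) fun t => ?_
    have hm' : ∀ j, 0 < Function.update m i (t + 1) j := by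
      intro j; rcases eq_or_ne j i with rfl | hj <;> simp [*]
    have := multilinearEval_nonneg_of_mem_coneK hb hm'
    rwa [← insert_erase hi, Function.comp_update, multilinearEval_insert_update hiN,
      Nat.cast_succ] at this
  have hDGH (m : ℕ → ℕ) : D G m + D H m = 0 := by
    simp only [D, multilinearEval, ← sum_add_distrib, ← add_mul]
    exact sum_eq_zero fun S _ => by rw [hGH _ (mem_insert_self i S), zero_mul]
  have := eq_zero_of_multilinearEval_eq_zero
    (fun m hm => le_antisymm (by linarith [hD hH hm, hDGH m]) (hD hG hm))
    (S.erase i) (erase_subset_erase i hSn)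
  rwa [insert_erase hS] at this

def SupportedIn (M : Finset ℕ) : Set (Finset ℕ → ℝ) := {b | ∀ S, b S ≠ 0 → S ⊆ M}

theorem mem_supportedIn_of_eq_add {n : ℕ} {M : Finset ℕ} {a G H : Finset ℕ → ℝ}
    (ha : a ∈ SupportedIn M) (hG : G ∈ coneK (n + 1)) (hH : H ∈ coneK (n + 1))
    (hsum : a = G + H) : G ∈ SupportedIn M := by
  intro S hGS i hiS
  by_contra hiM
  have hSn : S ⊆ Icc 1 n := by
    by_contra h
    exact hGS (hG.1 S (by rwa [Nat.add_sub_cancel]))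
  refine hGS (eq_zero_of_mem_coneK_of_add_eq_zero (hSn hiS) hG hH (fun S' hiS' => ?_) hiS)
  rw [← Pi.add_apply, ← hsum]
  by_contra h
  exact hiM (ha S' h hiS')

theorem isExtremeRay_inter_iff {K D : Set (Finset ℕ → ℝ)} {a : Finset ℕ → ℝ}
    (ha : a ∈ D) (hface : ∀ G H, G ∈ K → H ∈ K → a = G + H → G ∈ D) :
    IsExtremeRay (K ∩ D) a ↔ IsExtremeRay K a :=
  ⟨fun ⟨⟨haK, _⟩, ha0, hext⟩ => ⟨haK, ha0, fun G H hG hH hsum =>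
      hext G H ⟨hG, hface G H hG hH hsum⟩
        ⟨hH, hface H G hH hG (hsum.trans (add_comm G H))⟩ hsum⟩,
    fun ⟨haK, ha0, hext⟩ => ⟨⟨haK, ha⟩, ha0, fun G H hG hH => hext G H hG.1 hH.1⟩⟩

section LinearTransfer

variable {E K : Set (Finset ℕ → ℝ)} {f g : (Finset ℕ → ℝ) →ₗ[ℝ] Finset ℕ → ℝ}

theorem IsExtremeRay.map (hf : Set.MapsTo f E K) (hg : Set.MapsTo g K E)
    (hgf : Set.LeftInvOn g f E) (hfg : Set.LeftInvOn f g K) {a : Finset ℕ → ℝ}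
    (h : IsExtremeRay E a) : IsExtremeRay K (f a) := by
  obtain ⟨haE, ha0, hext⟩ := h
  refine ⟨hf haE, fun h0 => ha0 ?_, fun G H hG hH hsum => ?_⟩
  · rw [← hgf haE, h0, map_zero]
  · obtain ⟨⟨c, hc, hcG⟩, d, hd, hdH⟩ :=
      hext _ _ (hg hG) (hg hH) (by rw [← map_add, ← hsum, hgf haE])
    exact ⟨⟨c, hc, by rw [← hfg hG, hcG, map_smul]⟩, d, hd,
      by rw [← hfg hH, hdH, map_smul]⟩

theorem isExtremeRay_map_iff (hf : Set.MapsTo f E K) (hg : Set.MapsTo g K E)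
    (hgf : Set.LeftInvOn g f E) (hfg : Set.LeftInvOn f g K) {a : Finset ℕ → ℝ}
    (ha : g (f a) = a) : IsExtremeRay K (f a) ↔ IsExtremeRay E a :=
  ⟨fun h => ha ▸ h.map hg hf hfg hgf, fun h => h.map hf hg hgf hfg⟩

end LinearTransfer

section Reindex

variable (ρ : ℕ → ℕ) (k : ℕ)

noncomputable def pullbackCoeff : (Finset ℕ → ℝ) →ₗ[ℝ] (Finset ℕ → ℝ) where
  toFun b T := if T ⊆ Icc 1 k then b (T.image ρ) else 0
  map_add' b b' := by ext T; by_cases h : T ⊆ Icc 1 k <;> simp [h]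
  map_smul' c b := by ext T; by_cases h : T ⊆ Icc 1 k <;> simp [h]

noncomputable def pushforwardCoeff : (Finset ℕ → ℝ) →ₗ[ℝ] (Finset ℕ → ℝ) where
  toFun b S := if S ⊆ (Icc 1 k).image ρ then b {t ∈ Icc 1 k | ρ t ∈ S} else 0
  map_add' b b' := by ext S; by_cases h : S ⊆ (Icc 1 k).image ρ <;> simp [h]
  map_smul' c b := by ext S; by_cases h : S ⊆ (Icc 1 k).image ρ <;> simp [h]

variable {ρ k}

theorem pullbackCoeff_apply {b : Finset ℕ → ℝ} {T : Finset ℕ} (hT : T ⊆ Icc 1 k) :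
    pullbackCoeff ρ k b T = b (T.image ρ) :=
  if_pos hT

theorem pushforwardCoeff_apply_image (hρ : ρ.Injective) {b : Finset ℕ → ℝ} {T : Finset ℕ}
    (hT : T ⊆ Icc 1 k) : pushforwardCoeff ρ k b (T.image ρ) = b T := by
  rw [pushforwardCoeff, LinearMap.coe_mk, AddHom.coe_mk, if_pos (image_subset_image hT)]
  congr 1
  ext t
  simp only [mem_filter, hρ.mem_finset_image]
  exact ⟨And.right, fun ht => ⟨hT ht, ht⟩⟩

theorem image_filter_mem_eq {S : Finset ℕ} (hS : S ⊆ (Icc 1 k).image ρ) :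
    {t ∈ Icc 1 k | ρ t ∈ S}.image ρ = S := by
  rw [← filter_image (p := (· ∈ S)), filter_mem_eq_inter, inter_eq_right.2 hS]

theorem pushforwardCoeff_pullbackCoeff :
    Set.LeftInvOn (pushforwardCoeff ρ k) (pullbackCoeff ρ k)
      (SupportedIn ((Icc 1 k).image ρ)) := by
  intro b hb
  ext S
  by_cases hS : S ⊆ (Icc 1 k).image ρ
  · rw [pushforwardCoeff, LinearMap.coe_mk, AddHom.coe_mk, if_pos hS,
      pullbackCoeff_apply (filter_subset _ _), image_filter_mem_eq hS]
  · rw [pushforwardCoeff, LinearMap.coe_mk, AddHom.coe_mk, if_neg hS]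
    by_contra h
    exact hS (hb S (Ne.symm h))

theorem pullbackCoeff_pushforwardCoeff (hρ : ρ.Injective) :
    Set.LeftInvOn (pullbackCoeff ρ k) (pushforwardCoeff ρ k) (coneK (k + 1)) := by
  intro b hb
  ext T
  by_cases hT : T ⊆ Icc 1 k
  · rw [pullbackCoeff_apply hT, pushforwardCoeff_apply_image hρ hT]
  · rw [pullbackCoeff, LinearMap.coe_mk, AddHom.coe_mk, if_neg hT,
      hb.1 T (by rwa [Nat.add_sub_cancel])]

theorem sum_powerset_eq_sum_powerset_image (hρ : ρ.Injective) {N : Finset ℕ}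
    (hN : (Icc 1 k).image ρ ⊆ N) {f : Finset ℕ → ℝ}
    (hf : ∀ S, f S ≠ 0 → S ⊆ (Icc 1 k).image ρ) :
    ∑ S ∈ N.powerset, f S = ∑ T ∈ (Icc 1 k).powerset, f (T.image ρ) := by
  rw [← sum_image (image_injective hρ).injOn, ← powerset_image]
  refine (sum_subset (powerset_mono.2 hN) fun S _ hS => ?_).symm
  by_contra h
  exact hS (mem_powerset.2 (hf S h))

end Reindex

section ConeTransfer

variable {n k : ℕ} {ρ : ℕ → ℕ}

theorem image_Icc_subset_Icc (hρ : StrictMono ρ) (hρ0 : ρ 0 = 0) (hρk : ρ (k + 1) = n + 1) :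
    (Icc 1 k).image ρ ⊆ Icc 1 n := by
  intro i hi
  obtain ⟨t, ht, rfl⟩ := mem_image.1 hi
  have h1 := hρ (show 0 < t by have := mem_Icc.1 ht; omega)
  have h2 := hρ (show t < k + 1 by have := mem_Icc.1 ht; omega)
  rw [mem_Icc]
  omega

theorem pushforwardCoeff_mem (hρ : StrictMono ρ) (hρ0 : ρ 0 = 0) (hρk : ρ (k + 1) = n + 1)
    {b : Finset ℕ → ℝ} (hb : b ∈ coneK (k + 1)) :
    pushforwardCoeff ρ k b ∈ coneK (n + 1) ∩ SupportedIn ((Icc 1 k).image ρ) := by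
  have hsupp : pushforwardCoeff ρ k b ∈ SupportedIn ((Icc 1 k).image ρ) := fun S hS => by
    by_contra h
    exact hS (if_neg h)
  refine ⟨⟨fun S hS => ?_, fun P hP => ?_⟩, hsupp⟩
  · by_contra h
    rw [Nat.add_sub_cancel] at hS
    exact hS ((hsupp S h).trans (image_Icc_subset_Icc hρ hρ0 hρk))
  · have htop : P.rank P.top = ρ (k + 1) := hP.trans hρk.symm
    have := hb.2 (P.rankSelection hρ hρ0 (Set.mem_range.2 ⟨_, htop.symm⟩))
      (GradedPoset.rankSelection_rank_top htop)
    rw [Nat.add_sub_cancel] at this ⊢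
    rw [sum_powerset_eq_sum_powerset_image hρ.injective (image_Icc_subset_Icc hρ hρ0 hρk)
      fun S h => hsupp S (left_ne_zero_of_mul h)]
    refine this.trans_eq (sum_congr rfl fun T hT => ?_)
    rw [pushforwardCoeff_apply_image hρ.injective (mem_powerset.1 hT),
      GradedPoset.flagNum_rankSelection]

theorem pullbackCoeff_mem (hρ : StrictMono ρ) (hρ0 : ρ 0 = 0) (hρk : ρ (k + 1) = n + 1)
    (hρk' : ρ (k + 2) = n + 2) {b : Finset ℕ → ℝ}
    (hb : b ∈ coneK (n + 1) ∩ SupportedIn ((Icc 1 k).image ρ)) :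
    pullbackCoeff ρ k b ∈ coneK (k + 1) := by
  refine ⟨fun T hT => if_neg (by rwa [Nat.add_sub_cancel] at hT), fun Q hQ => ?_⟩
  have htop : ρ (Q.rank Q.top + 1) = ρ (Q.rank Q.top) + 1 := by rw [hQ, hρk, hρk']
  have := hb.1.2 (Q.stretch ρ hρ hρ0 htop) (by rw [GradedPoset.stretch_rank_top, hQ, hρk])
  rw [Nat.add_sub_cancel] at this ⊢
  rw [sum_powerset_eq_sum_powerset_image hρ.injective (image_Icc_subset_Icc hρ hρ0 hρk)
    fun S h => hb.2 S (left_ne_zero_of_mul h)] at this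
  refine this.trans_eq (sum_congr rfl fun T hT => ?_)
  rw [pullbackCoeff_apply (mem_powerset.1 hT), GradedPoset.flagNum_stretch]

theorem mem_coneK_iff_pullbackCoeff_mem (hρ : StrictMono ρ) (hρ0 : ρ 0 = 0)
    (hρk : ρ (k + 1) = n + 1) (hρk' : ρ (k + 2) = n + 2) {a : Finset ℕ → ℝ}
    (ha : a ∈ SupportedIn ((Icc 1 k).image ρ)) :
    a ∈ coneK (n + 1) ↔ pullbackCoeff ρ k a ∈ coneK (k + 1) :=
  ⟨fun h => pullbackCoeff_mem hρ hρ0 hρk hρk' ⟨h, ha⟩, fun h =>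
    pushforwardCoeff_pullbackCoeff ha ▸ (pushforwardCoeff_mem hρ hρ0 hρk h).1⟩

theorem isExtremeRay_iff_pullbackCoeff (hρ : StrictMono ρ) (hρ0 : ρ 0 = 0)
    (hρk : ρ (k + 1) = n + 1) (hρk' : ρ (k + 2) = n + 2) {a : Finset ℕ → ℝ}
    (ha : a ∈ SupportedIn ((Icc 1 k).image ρ)) :
    IsExtremeRay (coneK (n + 1)) a ↔ IsExtremeRay (coneK (k + 1)) (pullbackCoeff ρ k a) := by
  rw [← isExtremeRay_inter_iff ha fun G H hG hH => mem_supportedIn_of_eq_add ha hG hH]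
  exact (isExtremeRay_map_iff (fun _ => pullbackCoeff_mem hρ hρ0 hρk hρk')
    (fun _ => pushforwardCoeff_mem hρ hρ0 hρk) (pushforwardCoeff_pullbackCoeff.mono
      Set.inter_subset_right) (pullbackCoeff_pushforwardCoeff hρ.injective)
    (pushforwardCoeff_pullbackCoeff ha)).symm

end ConeTransfer

theorem exists_strictMono_extend {n k : ℕ} {γ : ℕ → ℕ} (hγ : StrictMonoOn γ (Icc 1 k))
    (hγn : ∀ t ∈ Icc 1 k, γ t ∈ Icc 1 n) :
    ∃ ρ : ℕ → ℕ, StrictMono ρ ∧ ρ 0 = 0 ∧ ρ (k + 1) = n + 1 ∧ ρ (k + 2) = n + 2 ∧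
      Set.EqOn ρ γ (Icc 1 k) := by
  let ρ : ℕ → ℕ := fun j => if j = 0 then 0 else if j ≤ k then γ j else j + n - k
  have hργ : Set.EqOn ρ γ (Icc 1 k) := fun t ht => by
    have := mem_Icc.1 ht
    simp only [ρ, if_neg (show t ≠ 0 by omega), if_pos this.2]
  have hρ_gt {j} (hj : k < j) : ρ j = j + n - k := by
    simp only [ρ, if_neg (show j ≠ 0 by omega), if_neg (show ¬j ≤ k by omega)]
  refine ⟨ρ, strictMono_nat_of_lt_succ fun j => ?_, rfl,
    (hρ_gt (j := k + 1) (by omega)).trans (by omega),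
    (hρ_gt (j := k + 2) (by omega)).trans (by omega), hργ⟩
  rcases lt_or_ge k (j + 1) with hk | hk
  · rw [hρ_gt hk]
    rcases lt_or_ge k j with hj | hj
    · rw [hρ_gt hj]; omega
    rcases Nat.eq_zero_or_pos j with rfl | hj0
    · show 0 < _; omega
    have := mem_Icc.1 (hγn j (mem_Icc.2 ⟨hj0, hj⟩))
    rw [hργ (mem_Icc.2 ⟨hj0, hj⟩)]
    omega
  · have hj1 : j + 1 ∈ Icc 1 k := mem_Icc.2 ⟨by omega, hk⟩
    rw [hργ hj1]
    rcases Nat.eq_zero_or_pos j with rfl | hj0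
    · show 0 < _; have := mem_Icc.1 (hγn _ hj1); omega
    have hj : j ∈ Icc 1 k := mem_Icc.2 ⟨hj0, by omega⟩
    rw [hργ hj]
    exact hγ hj hj1 (Nat.lt_succ_self j)

theorem stmt_18_general (n : ℕ) (a : Finset ℕ → ℝ)
    (ha : ∀ S : Finset ℕ, ¬ S ⊆ Finset.Icc 1 n → a S = 0)
    (M : Finset ℕ)
    (hM : ∀ i : ℕ, i ∈ M ↔ i ∈ Finset.Icc 1 n ∧ ∃ S : Finset ℕ, a S ≠ 0 ∧ i ∈ S)
    (k : ℕ)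
    (γ : ℕ → ℕ) (hγmono : StrictMonoOn γ ↑(Finset.Icc 1 k))
    (hγbij : (Finset.Icc 1 k).image γ = M)
    (a' : Finset ℕ → ℝ)
    (ha' : a' = fun T => if T ⊆ Finset.Icc 1 k then a (T.image γ) else 0) :
    (a ∈ coneK (n + 1) ↔ a' ∈ coneK (k + 1)) ∧
    (IsExtremeRay (coneK (n + 1)) a ↔ IsExtremeRay (coneK (k + 1)) a') := by
  have hγn : ∀ t ∈ Icc 1 k, γ t ∈ Icc 1 n := fun t ht =>
    ((hM _).1 (hγbij ▸ mem_image_of_mem γ ht)).1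
  obtain ⟨ρ, hρ, hρ0, hρk, hρk', hργ⟩ := exists_strictMono_extend hγmono hγn
  have hsupp : a ∈ SupportedIn ((Icc 1 k).image ρ) := by
    rw [image_congr hργ, hγbij]
    intro S hS i hi
    have hSn : S ⊆ Icc 1 n := by
      by_contra h
      exact hS (ha S h)
    exact (hM i).2 ⟨hSn hi, S, hS, hi⟩
  have ha'ρ : a' = pullbackCoeff ρ k a := by
    ext T
    rw [ha']
    dsimp only
    split_ifs with hT
    · rw [pullbackCoeff_apply hT, image_congr (hργ.mono hT)]
    · exact (if_neg hT).symm
  rw [ha'ρ]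
  exact ⟨mem_coneK_iff_pullbackCoeff_mem hρ hρ0 hρk hρk' hsupp,
    isExtremeRay_iff_pullbackCoeff hρ hρ0 hρk hρk' hsupp⟩

theorem stmt_18 (n : ℕ) (hn : 1 ≤ n) (a : Finset ℕ → ℝ)
    (ha : ∀ S : Finset ℕ, ¬ S ⊆ Finset.Icc 1 n → a S = 0)
    (M : Finset ℕ)
    (hM : ∀ i : ℕ, i ∈ M ↔ i ∈ Finset.Icc 1 n ∧ ∃ S : Finset ℕ, a S ≠ 0 ∧ i ∈ S)
    (k : ℕ) (hk : k = M.card)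
    (γ : ℕ → ℕ) (hγmono : StrictMonoOn γ ↑(Finset.Icc 1 k))
    (hγbij : (Finset.Icc 1 k).image γ = M)
    (a' : Finset ℕ → ℝ)
    (ha' : a' = fun T => if T ⊆ Finset.Icc 1 k then a (T.image γ) else 0) :
    (a ∈ coneK (n + 1) ↔ a' ∈ coneK (k + 1)) ∧
    (IsExtremeRay (coneK (n + 1)) a ↔ IsExtremeRay (coneK (k + 1)) a') :=
  stmt_18_general n a ha M hM k γ hγmono hγbij a' ha'
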